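/- arXiv:2106.13949 — 2 statements merged into one kernel-verified Lean document; each statement's English description precedes it below -/
import Mathlib

section
/- Let A be a bounded linear operator on a complex Hilbert space H. Then w(A)² ≤ (1/4)‖ |A|² + |A*|² ‖ + (1/2) w( |A*| |A| ). -/
open ContinuousLinearMap Complex

variable {H : Type*} [NormedAddCommGroup H] [InnerProductSpace ℂ H] [CompleteSpace H]

noncomputable def nrad (A : H →L[ℂ] H) : ℝ :=
  ⨆ x : {x : H // ‖x‖ = 1}, ‖(inner ℂ (A x) (x : H) : ℂ)‖

noncomputable def reP (A : H →L[ℂ] H) : H →L[ℂ] H := (2 : ℂ)⁻¹ • (A + adjoint A)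
noncomputable def imP (A : H →L[ℂ] H) : H →L[ℂ] H := (2 * Complex.I)⁻¹ • (A - adjoint A)

noncomputable def oabs (A : H →L[ℂ] H) : H →L[ℂ] H := cfc Real.sqrt (adjoint A * A)

noncomputable def opow (T : H →L[ℂ] H) (r : ℝ) : H →L[ℂ] H := cfc (fun t : ℝ => t ^ r) T

/-!
Mixed Schwarz plus Buzano. For every `ε > 0` factor `A = Y† Z` with `Z† Z = |A| + ε` and
`Y† Y = A (|A| + ε)⁻¹ A† ≤ |A†|`; the last inequality rests on the intertwining relation
`A f(A†A) = f(AA†) A`. For a unit vector `x`, Cauchy–Schwarz and `ε → 0` give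
`|⟨Ax, x⟩|² ≤ ⟨|A|x, x⟩ ⟨|A†|x, x⟩`. Buzano's inequality, applied to `u = |A|x` and `v = |A†|x`,
bounds the right-hand side by `(‖u‖ ‖v‖ + |⟨u, v⟩|) / 2`, where `2 ‖u‖ ‖v‖ ≤ ‖Ax‖² + ‖A†x‖²
= ⟨(A†A + AA†)x, x⟩` and `⟨u, v⟩ = ⟨|A†| |A| x, x⟩`.
-/

open scoped InnerProductSpace
open Polynomial Filter Topology Set

theorem SemiconjBy.aeval {R A : Type*} [CommSemiring R] [Semiring A] [Algebra R A]
    {x a b : A} (h : SemiconjBy x a b) (p : R[X]) :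
    SemiconjBy x (aeval a p) (aeval b p) := by
  induction p using Polynomial.induction_on' with
  | add p q hp hq => simpa only [map_add] using hp.add_right hq
  | monomial n r =>
    simpa only [aeval_monomial] using
      SemiconjBy.mul_right (Algebra.commute_algebraMap_right r x) (h.pow_right n)

lemma exists_seq_polynomial_tendstoUniformlyOn {f : ℝ → ℝ} (hf : Continuous f) (m M : ℝ) :
    ∃ p : ℕ → ℝ[X], TendstoUniformlyOn (fun n t => (p n).eval t) f atTop (Icc m M) := by
  choose p hp using fun n : ℕ =>
    exists_polynomial_near_of_continuousOn m M f hf.continuousOn (1 / (n + 1))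
      Nat.one_div_pos_of_nat
  refine ⟨p, Metric.tendstoUniformlyOn_iff.mpr fun ε hε => ?_⟩
  obtain ⟨N, hN⟩ := exists_nat_one_div_lt hε
  filter_upwards [eventually_ge_atTop N] with n hn t ht
  rw [Real.dist_eq, abs_sub_comm]
  refine (hp n t ht).trans (lt_of_le_of_lt ?_ hN)
  gcongr

lemma div_sqrt_add_le_sqrt (t : ℝ) {ε : ℝ} (hε : 0 < ε) : t / (√t + ε) ≤ √t := by
  rcases le_total 0 t with ht | ht
  · rw [div_le_iff₀ (by positivity)]
    nlinarith [Real.mul_self_sqrt ht, Real.sqrt_nonneg t]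
  · exact (div_nonpos_of_nonpos_of_nonneg ht (by positivity)).trans (Real.sqrt_nonneg t)

section ContinuousFunctionalCalculus

variable {A : Type*} [Ring A] [StarRing A] [Algebra ℝ A] [TopologicalSpace A]
  [ContinuousFunctionalCalculus ℝ A IsSelfAdjoint]

lemma cfc_sqrt_mul_self [PartialOrder A] [StarOrderedRing A] [NonnegSpectrumClass ℝ A]
    (a : A) (ha : 0 ≤ a) : cfc Real.sqrt a * cfc Real.sqrt a = a := by
  rw [← cfc_mul _ _ a Real.continuous_sqrt.continuousOn Real.continuous_sqrt.continuousOn,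
    cfc_congr fun t ht => Real.mul_self_sqrt (spectrum_nonneg_of_nonneg ha ht),
    cfc_id' ℝ a ha.isSelfAdjoint]

variable [IsTopologicalRing A] [T2Space A]

theorem SemiconjBy.cfc_real {x a b : A} (h : SemiconjBy x a b) (ha : IsSelfAdjoint a)
    (hb : IsSelfAdjoint b) {f : ℝ → ℝ} (hf : Continuous f) :
    SemiconjBy x (cfc f a) (cfc f b) := by
  set K := spectrum ℝ a ∪ spectrum ℝ b
  have hK : K ⊆ Icc (sInf K) (sSup K) :=
    ((ContinuousFunctionalCalculus.isCompact_spectrum a).union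
      (ContinuousFunctionalCalculus.isCompact_spectrum b)).isBounded.subset_Icc_sInf_sSup
  obtain ⟨p, hp⟩ := exists_seq_polynomial_tendstoUniformlyOn hf (sInf K) (sSup K)
  have hlim : ∀ c : A, spectrum ℝ c ⊆ K →
      Tendsto (fun n => cfc (p n).eval c) atTop (𝓝 (cfc f c)) := fun c hc =>
    tendsto_cfc_fun (hp.mono (hc.trans hK)) (.of_forall fun n => (p n).continuous.continuousOn)
  have hpoly : ∀ n, SemiconjBy x (cfc (p n).eval a) (cfc (p n).eval b) := fun n => by
    rw [cfc_polynomial (p n) a ha, cfc_polynomial (p n) b hb]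
    exact h.aeval (p n)
  exact tendsto_nhds_unique
    (((hlim a subset_union_left).const_mul x).congr hpoly)
    ((hlim b subset_union_right).mul_const x)

/-- The witnesses are `z = (|a| + ε)^{1/2}` and `y = (|a| + ε)^{-1/2} a⋆`, where
`|a| = cfc √ (a⋆a)`. -/
theorem exists_star_mul_factorization [PartialOrder A] [StarOrderedRing A] (a : A) {ε : ℝ}
    (hε : 0 < ε) :
    ∃ y z : A, star y * z = a ∧
      star z * z = cfc Real.sqrt (star a * a) + algebraMap ℝ A ε ∧
      star y * y ≤ cfc Real.sqrt (a * star a) := by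
  set s : ℝ → ℝ := fun t => √(√t + ε)
  have hs_pos : ∀ t, 0 < s t := fun t => Real.sqrt_pos.mpr (by positivity)
  have hs_cont : Continuous s := by fun_prop
  have hinv_cont : Continuous fun t => (s t)⁻¹ := hs_cont.inv₀ fun t => (hs_pos t).ne'
  set k := cfc (fun t => (s t)⁻¹) (star a * a)
  have hk : IsSelfAdjoint k := cfc_predicate _ _
  refine ⟨k * star a, cfc s (star a * a), ?_, ?_, ?_⟩
  · rw [star_mul, star_star, hk.star_eq, mul_assoc,
      ← cfc_mul _ _ _ hinv_cont.continuousOn hs_cont.continuousOn,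
      cfc_congr (g := fun _ => (1 : ℝ)) fun t _ => inv_mul_cancel₀ (hs_pos t).ne',
      cfc_const_one ℝ _, mul_one]
  · rw [(cfc_predicate s (star a * a)).star_eq,
      ← cfc_mul _ _ _ hs_cont.continuousOn hs_cont.continuousOn,
      ← cfc_add_const ε Real.sqrt _ Real.continuous_sqrt.continuousOn]
    exact cfc_congr fun t _ => Real.mul_self_sqrt (by positivity)
  · have hsemi : SemiconjBy a (star a * a) (a * star a) := (mul_assoc _ _ _).symm
    have hcont : Continuous fun t => (s t)⁻¹ * (s t)⁻¹ := hinv_cont.mul hinv_cont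
    calc star (k * star a) * (k * star a) = a * (k * k) * star a := by
          rw [star_mul, star_star, hk.star_eq]; noncomm_ring
      _ = cfc (fun t => (s t)⁻¹ * (s t)⁻¹) (a * star a) * (a * star a) := by
          rw [← cfc_mul _ _ _ hinv_cont.continuousOn hinv_cont.continuousOn,
            (hsemi.cfc_real (.star_mul_self a) (.mul_star_self a) hcont).eq, mul_assoc]
      _ = cfc (fun t => t / (√t + ε)) (a * star a) := by
          conv_lhs => arg 2; rw [← cfc_id' ℝ (a * star a)]
          rw [← cfc_mul _ (fun t => t) _ hcont.continuousOn continuousOn_id]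
          refine cfc_congr fun t _ => ?_
          simp only [s, ← mul_inv, Real.mul_self_sqrt (by positivity : 0 ≤ √t + ε)]
          ring
      _ ≤ cfc Real.sqrt (a * star a) :=
          cfc_mono (fun t _ => div_sqrt_add_le_sqrt t hε)
            (continuous_id.div (by fun_prop) fun t => (by positivity : 0 < √t + ε).ne').continuousOn

end ContinuousFunctionalCalculus

theorem norm_inner_mul_inner_le {𝕜 E : Type*} [RCLike 𝕜] [NormedAddCommGroup E]
    [InnerProductSpace 𝕜 E] (u v : E) {x : E} (hx : ‖x‖ = 1) :
    2 * ‖⟪u, x⟫_𝕜 * ⟪x, v⟫_𝕜‖ ≤ ‖u‖ * ‖v‖ + ‖⟪u, v⟫_𝕜‖ := by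
  have key : (2 : 𝕜) * (⟪u, x⟫_𝕜 * ⟪x, v⟫_𝕜) = ⟪(𝕜 ∙ x).reflection u, v⟫_𝕜 + ⟪u, v⟫_𝕜 := by
    rw [Submodule.reflection_apply, Submodule.starProjection_unit_singleton 𝕜 hx, two_smul,
      inner_sub_left, inner_add_left, inner_smul_left, inner_conj_symm]
    ring
  calc 2 * ‖⟪u, x⟫_𝕜 * ⟪x, v⟫_𝕜‖ = ‖⟪(𝕜 ∙ x).reflection u, v⟫_𝕜 + ⟪u, v⟫_𝕜‖ := by
        rw [← key, norm_mul (2 : 𝕜), RCLike.norm_two]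
    _ ≤ ‖(𝕜 ∙ x).reflection u‖ * ‖v‖ + ‖⟪u, v⟫_𝕜‖ :=
        (norm_add_le _ _).trans (add_le_add_left (norm_inner_le_norm _ _) _)
    _ = ‖u‖ * ‖v‖ + ‖⟪u, v⟫_𝕜‖ := by rw [LinearIsometryEquiv.norm_map]

section InnerProductSpace

variable {𝕜 E : Type*} [RCLike 𝕜] [NormedAddCommGroup E] [InnerProductSpace 𝕜 E]

lemma re_inner_apply_le_of_le {S T : E →L[𝕜] E} (h : S ≤ T) (x : E) :
    RCLike.re ⟪S x, x⟫_𝕜 ≤ RCLike.re ⟪T x, x⟫_𝕜 := by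
  have := ((le_def S T).mp h).re_inner_nonneg_left x
  rwa [sub_apply, inner_sub_left, map_sub, sub_nonneg] at this

lemma re_inner_apply_le_norm (T : E →L[𝕜] E) {x : E} (hx : ‖x‖ = 1) :
    RCLike.re ⟪T x, x⟫_𝕜 ≤ ‖T‖ :=
  calc RCLike.re ⟪T x, x⟫_𝕜 ≤ ‖T x‖ * ‖x‖ := re_inner_le_norm _ _
    _ ≤ ‖T‖ * ‖x‖ * ‖x‖ := by gcongr; exact T.le_opNorm x
    _ = ‖T‖ := by rw [hx, mul_one, mul_one]

end InnerProductSpace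

section NumericalRadius

variable {E : Type*} [NormedAddCommGroup E] [InnerProductSpace ℂ E]

lemma nrad_nonneg (T : E →L[ℂ] E) : 0 ≤ nrad T :=
  Real.iSup_nonneg fun _ => norm_nonneg _

lemma norm_inner_le_nrad (T : E →L[ℂ] E) {x : E} (hx : ‖x‖ = 1) : ‖⟪T x, x⟫_ℂ‖ ≤ nrad T := by
  refine le_ciSup (f := fun y : {y : E // ‖y‖ = 1} => ‖⟪T y, (y : E)⟫_ℂ‖) ⟨‖T‖, ?_⟩ ⟨x, hx⟩
  rintro r ⟨y, rfl⟩
  calc ‖⟪T y, (y : E)⟫_ℂ‖ ≤ ‖T y‖ * ‖(y : E)‖ := norm_inner_le_norm _ _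
    _ ≤ ‖T‖ * ‖(y : E)‖ * ‖(y : E)‖ := by gcongr; exact T.le_opNorm _
    _ = ‖T‖ := by rw [y.2, mul_one, mul_one]

lemma sq_nrad_le {T : E →L[ℂ] E} {c : ℝ} (hc : 0 ≤ c)
    (h : ∀ x : E, ‖x‖ = 1 → ‖⟪T x, x⟫_ℂ‖ ^ 2 ≤ c) : nrad T ^ 2 ≤ c := by
  refine (Real.le_sqrt (nrad_nonneg T) hc).mp (Real.iSup_le (fun x => ?_) (Real.sqrt_nonneg c))
  exact Real.le_sqrt_of_sq_le (h x x.2)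

end NumericalRadius

lemma isPositive_oabs (A : H →L[ℂ] H) : (oabs A).IsPositive :=
  (nonneg_iff_isPositive _).mp (cfc_nonneg fun t _ => Real.sqrt_nonneg t)

lemma oabs_adjoint (A : H →L[ℂ] H) : oabs (adjoint A) = cfc Real.sqrt (A * adjoint A) := by
  rw [oabs, adjoint_adjoint]

lemma norm_oabs_apply (A : H →L[ℂ] H) (x : H) : ‖oabs A x‖ = ‖A x‖ := by
  have hsq : adjoint (oabs A) * oabs A = adjoint A * A := by
    rw [← star_eq_adjoint, (isPositive_oabs A).isSelfAdjoint.star_eq, oabs]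
    exact cfc_sqrt_mul_self _ (by rw [← star_eq_adjoint]; exact star_mul_self_nonneg A)
  rw [← sq_eq_sq₀ (norm_nonneg _) (norm_nonneg _), apply_norm_sq_eq_inner_adjoint_left,
    apply_norm_sq_eq_inner_adjoint_left]
  exact congrArg (fun T : H →L[ℂ] H => RCLike.re ⟪T x, x⟫_ℂ) hsq

lemma norm_oabs_apply_mul_le (A : H →L[ℂ] H) {x : H} (hx : ‖x‖ = 1) :
    ‖oabs A x‖ * ‖oabs (adjoint A) x‖ ≤ ‖adjoint A * A + A * adjoint A‖ / 2 := by
  have hsum : ‖A x‖ ^ 2 + ‖adjoint A x‖ ^ 2 ≤ ‖adjoint A * A + A * adjoint A‖ := by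
    rw [apply_norm_sq_eq_inner_adjoint_left, apply_norm_sq_eq_inner_adjoint_left,
      adjoint_adjoint, ← map_add, ← inner_add_left]
    exact re_inner_apply_le_norm (adjoint A * A + A * adjoint A) hx
  rw [norm_oabs_apply, norm_oabs_apply]
  nlinarith [sq_nonneg (‖A x‖ - ‖adjoint A x‖)]

theorem norm_inner_apply_self_sq_le (A : H →L[ℂ] H) (x : H) :
    ‖⟪A x, x⟫_ℂ‖ ^ 2 ≤ RCLike.re ⟪oabs A x, x⟫_ℂ * RCLike.re ⟪oabs (adjoint A) x, x⟫_ℂ := by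
  set a := RCLike.re ⟪oabs A x, x⟫_ℂ
  set b := RCLike.re ⟪oabs (adjoint A) x, x⟫_ℂ
  have hreg : ∀ ε > 0, ‖⟪A x, x⟫_ℂ‖ ^ 2 ≤ (a + ε * ‖x‖ ^ 2) * b := by
    intro ε hε
    obtain ⟨Y, Z, hA, hZ, hY⟩ := exists_star_mul_factorization A hε
    simp only [star_eq_adjoint] at hA hZ hY
    have hinner : ⟪A x, x⟫_ℂ = ⟪Z x, Y x⟫_ℂ := by
      rw [← hA]
      exact adjoint_inner_left Y x (Z x)
    have hZx : ‖Z x‖ ^ 2 = a + ε * ‖x‖ ^ 2 := by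
      rw [apply_norm_sq_eq_inner_adjoint_left]
      change RCLike.re ⟪(adjoint Z * Z) x, x⟫_ℂ = _
      rw [hZ, add_apply, inner_add_left, map_add, Algebra.algebraMap_eq_smul_one, smul_apply,
        one_apply_eq_self, inner_smul_left_eq_smul, RCLike.smul_re, inner_self_eq_norm_sq]
      rfl
    have hYx : ‖Y x‖ ^ 2 ≤ b := by
      rw [← oabs_adjoint] at hY
      rw [apply_norm_sq_eq_inner_adjoint_left]
      exact re_inner_apply_le_of_le hY x
    calc ‖⟪A x, x⟫_ℂ‖ ^ 2 ≤ (‖Z x‖ * ‖Y x‖) ^ 2 := by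
          rw [hinner]; gcongr; exact norm_inner_le_norm _ _
      _ = ‖Z x‖ ^ 2 * ‖Y x‖ ^ 2 := mul_pow _ _ _
      _ ≤ (a + ε * ‖x‖ ^ 2) * b := by rw [hZx]; gcongr; rw [← hZx]; positivity
  have hlim : Tendsto (fun ε : ℝ => (a + ε * ‖x‖ ^ 2) * b) (𝓝[>] 0) (𝓝 (a * b)) := by
    refine tendsto_nhdsWithin_of_tendsto_nhds (Continuous.tendsto' (by fun_prop) _ _ ?_)
    simp
  exact ge_of_tendsto hlim (eventually_nhdsWithin_of_forall hreg)

theorem stmt9 (A : H →L[ℂ] H) :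
    (nrad A) ^ 2
      ≤ (1/4) * ‖adjoint A * A + A * adjoint A‖
        + (1/2) * nrad (oabs (adjoint A) * oabs A) := by
  set B := oabs A
  set C := oabs (adjoint A)
  refine sq_nrad_le (add_nonneg (by positivity) (mul_nonneg (by norm_num) (nrad_nonneg _)))
    fun x hx => ?_
  calc ‖⟪A x, x⟫_ℂ‖ ^ 2 ≤ RCLike.re ⟪B x, x⟫_ℂ * RCLike.re ⟪C x, x⟫_ℂ :=
        norm_inner_apply_self_sq_le A x
    _ ≤ ‖⟪B x, x⟫_ℂ * ⟪x, C x⟫_ℂ‖ := by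
        rw [norm_mul, norm_inner_symm x (C x)]
        exact mul_le_mul (RCLike.re_le_norm _) (RCLike.re_le_norm _)
          ((isPositive_oabs _).re_inner_nonneg_left x) (norm_nonneg _)
    _ ≤ (‖B x‖ * ‖C x‖ + ‖⟪B x, C x⟫_ℂ‖) / 2 := by
        linarith [norm_inner_mul_inner_le (𝕜 := ℂ) (B x) (C x) hx]
    _ ≤ (‖adjoint A * A + A * adjoint A‖ / 2 + nrad (C * B)) / 2 := by
        gcongr
        · exact norm_oabs_apply_mul_le A hx
        · rw [← (isPositive_oabs _).inner_left_eq_inner_right]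
          exact norm_inner_le_nrad (C * B) hx
    _ = _ := by ring
end

section
/- Let A and B be bounded linear operators on a complex Hilbert space H. Then w(AB ± BA) ≤ 2√2 · ‖B‖ · √( w(A)² − (1/4)| ‖Re(A) + Im(A)‖² − ‖Re(A) − Im(A)‖² | ). -/
/-!
Fix a unit vector `x`. Since `⟨ABx, x⟩ = ⟨Bx, A*x⟩` and `⟨BAx, x⟩ = ⟨Ax, B*x⟩`, both
`|⟨(AB ± BA)x, x⟩|` are at most `‖B‖ (‖Ax‖ + ‖A*x‖) ≤ √2 ‖B‖ (‖Ax‖² + ‖A*x‖²)^(1/2)`.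
Write `A = R + iS` with `R = Re(A)`, `S = Im(A)` self-adjoint, so that `A* = R - iS`; the parallelogram
law gives `‖Ax‖² + ‖A*x‖² = 2‖Rx‖² + 2‖Sx‖² = ‖(R + S)x‖² + ‖(R - S)x‖² ≤ a + b` with
`a = ‖R + S‖²`, `b = ‖R - S‖²`. The norm of the self-adjoint operator `R ± S` is the supremum of
its quadratic form `|Re z ± Im z|`, `z = ⟨Ax, x⟩`, over unit vectors, and `|Re z ± Im z| ≤ √2 |z|`,
so `a, b ≤ 2 w(A)²`. Hence
`a + b = 2 max(a, b) - |a - b| ≤ 4 w(A)² - |a - b|`.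
-/

open ContinuousLinearMap Complex

variable {H : Type*} [NormedAddCommGroup H] [InnerProductSpace ℂ H] [CompleteSpace H]

theorem ContinuousLinearMap.norm_le_of_forall_abs_re_inner_le {𝕜 E : Type*} [RCLike 𝕜]
    [NormedAddCommGroup E] [InnerProductSpace 𝕜 E] {T : E →L[𝕜] E}
    (hT : (T : E →ₗ[𝕜] E).IsSymmetric) {c : ℝ} (hc : 0 ≤ c)
    (h : ∀ x, ‖x‖ = 1 → |RCLike.re (inner 𝕜 (T x) x)| ≤ c) : ‖T‖ ≤ c := by
  rw [T.norm_eq_iSup_rayleighQuotient hT]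
  refine ciSup_le fun x => ?_
  rcases eq_or_ne x 0 with rfl | hx
  · simpa using hc
  have hu : ‖(‖x‖⁻¹ : 𝕜) • x‖ = 1 := norm_smul_inv_norm hx
  rw [← T.rayleigh_smul x (c := (‖x‖⁻¹ : 𝕜)) (by simpa using hx)]
  simpa [rayleighQuotient, reApplyInnerSelf_apply, hu] using h _ hu

theorem abs_add_le_sqrt_two_mul_sqrt (p q : ℝ) : |p + q| ≤ √2 * √(p ^ 2 + q ^ 2) := by
  rw [← Real.sqrt_mul zero_le_two]
  exact Real.abs_le_sqrt add_sq_le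

theorem IsSelfAdjoint.abs_re_inner_add_apply_self_le {E : Type*} [NormedAddCommGroup E]
    [InnerProductSpace ℂ E] [CompleteSpace E] {R S : E →L[ℂ] E}
    (hR : IsSelfAdjoint R) (hS : IsSelfAdjoint S) (x : E) :
    |(inner ℂ ((R + S) x) x).re| ≤ √2 * ‖inner ℂ ((R + I • S) x) x‖ := by
  have hp := hR.isSymmetric.coe_reApplyInnerSelf_apply x
  have hq := hS.isSymmetric.coe_reApplyInnerSelf_apply x
  set p := R.reApplyInnerSelf x
  set q := S.reApplyInnerSelf x
  have hsum : inner ℂ ((R + S) x) x = (p + q : ℝ) := by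
    simp [← hp, ← hq]
  have hA : inner ℂ ((R + I • S) x) x = p + (-q : ℝ) * I := by
    simp [← hp, ← hq]
  rw [hsum, hA, Complex.norm_add_mul_I, neg_sq, Complex.ofReal_re]
  exact abs_add_le_sqrt_two_mul_sqrt p q

theorem norm_add_I_smul_sq_add_norm_sub_I_smul_sq {E : Type*} [NormedAddCommGroup E]
    [InnerProductSpace ℂ E] (u v : E) :
    ‖u + I • v‖ ^ 2 + ‖u - I • v‖ ^ 2 = ‖u + v‖ ^ 2 + ‖u - v‖ ^ 2 := by
  have h₁ := parallelogram_law_with_norm ℂ u (I • v)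
  have h₂ := parallelogram_law_with_norm ℂ u v
  rw [norm_smul, Complex.norm_I, one_mul] at h₁
  simp only [sq]
  linarith

theorem add_le_two_mul_sqrt_two_mul_sqrt {s t a b w : ℝ}
    (hst : s ^ 2 + t ^ 2 ≤ a + b) (ha : a ≤ 2 * w ^ 2) (hb : b ≤ 2 * w ^ 2) :
    s + t ≤ 2 * √2 * √(w ^ 2 - 1 / 4 * |a - b|) := by
  have hab : |a - b| ≤ 4 * w ^ 2 - a - b := abs_sub_le_iff.2 ⟨by linarith, by linarith⟩
  have h8 : 2 * √2 * √(w ^ 2 - 1 / 4 * |a - b|) = √(8 * (w ^ 2 - 1 / 4 * |a - b|)) := by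
    rw [Real.sqrt_mul (by norm_num), show (8 : ℝ) = 2 ^ 2 * 2 by norm_num,
      Real.sqrt_mul (by norm_num), Real.sqrt_sq zero_le_two]
  rw [h8]
  apply Real.le_sqrt_of_sq_le
  nlinarith [add_sq_le (a := s) (b := t)]

section NumericalRadius

variable {E : Type*} [NormedAddCommGroup E] [InnerProductSpace ℂ E] (A : E →L[ℂ] E)

theorem nrad_nonneg_s16 : 0 ≤ nrad A :=
  Real.iSup_nonneg fun _ => norm_nonneg _

theorem norm_inner_apply_self_le_nrad {x : E} (hx : ‖x‖ = 1) : ‖inner ℂ (A x) x‖ ≤ nrad A := by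
  refine le_ciSup (f := fun x : {x : E // ‖x‖ = 1} => ‖inner ℂ (A x) (x : E)‖) ⟨‖A‖, ?_⟩ ⟨x, hx⟩
  rintro _ ⟨⟨y, hy⟩, rfl⟩
  calc ‖inner ℂ (A y) y‖ ≤ ‖A y‖ * ‖y‖ := norm_inner_le_norm _ _
    _ ≤ ‖A‖ * ‖y‖ * ‖y‖ := by gcongr; exact A.le_opNorm y
    _ = ‖A‖ := by rw [hy, mul_one, mul_one]

theorem nrad_le {c : ℝ} (hc : 0 ≤ c) (h : ∀ x : E, ‖x‖ = 1 → ‖inner ℂ (A x) x‖ ≤ c) : nrad A ≤ c :=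
  Real.iSup_le (fun x => h x x.2) hc

theorem nrad_adjoint [CompleteSpace E] : nrad (adjoint A) = nrad A := by
  unfold nrad
  congr with x
  rw [adjoint_inner_left, norm_inner_symm]

theorem IsSelfAdjoint.norm_add_le_sqrt_two_mul_nrad [CompleteSpace E] {R S : E →L[ℂ] E}
    (hR : IsSelfAdjoint R) (hS : IsSelfAdjoint S) : ‖R + S‖ ≤ √2 * nrad (R + I • S) := by
  refine norm_le_of_forall_abs_re_inner_le (hR.add hS).isSymmetric
    (by positivity [nrad_nonneg_s16 (R + I • S)]) fun x hx => ?_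
  calc |(inner ℂ ((R + S) x) x).re| ≤ √2 * ‖inner ℂ ((R + I • S) x) x‖ :=
        hR.abs_re_inner_add_apply_self_le hS x
    _ ≤ √2 * nrad (R + I • S) := by gcongr; exact norm_inner_apply_self_le_nrad _ hx

end NumericalRadius

section CartesianDecomposition

variable {E : Type*} [NormedAddCommGroup E] [InnerProductSpace ℂ E] [CompleteSpace E]
  (A : E →L[ℂ] E)

theorem isSelfAdjoint_reP : IsSelfAdjoint (reP A) := by
  simp only [IsSelfAdjoint, reP, star_smul, star_add, star_eq_adjoint, adjoint_adjoint]
  simp [add_comm]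

theorem isSelfAdjoint_imP : IsSelfAdjoint (imP A) := by
  simp only [IsSelfAdjoint, imP, star_smul, star_sub, star_eq_adjoint, adjoint_adjoint]
  simp only [star_inv₀, star_mul', star_ofNat, Complex.star_def, conj_I]
  module

theorem reP_add_I_smul_imP : reP A + I • imP A = A := by
  have : I * (2 * I)⁻¹ = 2⁻¹ := by field_simp
  simp only [reP, imP, smul_smul, this]
  module

theorem reP_sub_I_smul_imP : reP A - I • imP A = adjoint A := by
  have : I * (2 * I)⁻¹ = 2⁻¹ := by field_simp
  simp only [reP, imP, smul_smul, this]
  module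

theorem norm_sq_apply_add_norm_sq_adjoint_apply (x : E) :
    ‖A x‖ ^ 2 + ‖adjoint A x‖ ^ 2 = ‖(reP A + imP A) x‖ ^ 2 + ‖(reP A - imP A) x‖ ^ 2 := by
  have hA : reP A x + I • imP A x = A x := by simpa using congr($(reP_add_I_smul_imP A) x)
  have hA' : reP A x - I • imP A x = adjoint A x := by
    simpa using congr($(reP_sub_I_smul_imP A) x)
  rw [← hA, ← hA', norm_add_I_smul_sq_add_norm_sub_I_smul_sq, add_apply, sub_apply]

theorem norm_reP_add_imP_sq_le : ‖reP A + imP A‖ ^ 2 ≤ 2 * nrad A ^ 2 := by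
  have h := (isSelfAdjoint_reP A).norm_add_le_sqrt_two_mul_nrad (isSelfAdjoint_imP A)
  rw [reP_add_I_smul_imP] at h
  nlinarith [norm_nonneg (reP A + imP A), Real.sq_sqrt (zero_le_two (α := ℝ))]

theorem norm_reP_sub_imP_sq_le : ‖reP A - imP A‖ ^ 2 ≤ 2 * nrad A ^ 2 := by
  have h := (isSelfAdjoint_reP A).norm_add_le_sqrt_two_mul_nrad (isSelfAdjoint_imP A).neg
  rw [← sub_eq_add_neg, smul_neg, ← sub_eq_add_neg, reP_sub_I_smul_imP, nrad_adjoint] at h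
  nlinarith [norm_nonneg (reP A - imP A), Real.sq_sqrt (zero_le_two (α := ℝ))]

end CartesianDecomposition

theorem norm_inner_mul_apply_self_add_le {E : Type*} [NormedAddCommGroup E]
    [InnerProductSpace ℂ E] [CompleteSpace E] (A B : E →L[ℂ] E) {x : E} (hx : ‖x‖ = 1) :
    ‖inner ℂ ((A * B) x) x‖ + ‖inner ℂ ((B * A) x) x‖ ≤ ‖B‖ * (‖A x‖ + ‖adjoint A x‖) := by
  rw [mul_def, mul_def, comp_apply, comp_apply, ← adjoint_inner_right A,
    ← adjoint_inner_right B (A x)]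
  have hB : ‖B x‖ ≤ ‖B‖ := B.unit_le_opNorm x hx.le
  have hB' : ‖adjoint B x‖ ≤ ‖B‖ := by
    simpa [LinearIsometryEquiv.norm_map] using (adjoint B).unit_le_opNorm x hx.le
  calc ‖inner ℂ (B x) (adjoint A x)‖ + ‖inner ℂ (A x) (adjoint B x)‖
      ≤ ‖B x‖ * ‖adjoint A x‖ + ‖A x‖ * ‖adjoint B x‖ :=
        add_le_add (norm_inner_le_norm _ _) (norm_inner_le_norm _ _)
    _ ≤ ‖B‖ * ‖adjoint A x‖ + ‖A x‖ * ‖B‖ := by gcongr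
    _ = ‖B‖ * (‖A x‖ + ‖adjoint A x‖) := by ring

theorem stmt16 (A B : H →L[ℂ] H) :
    nrad (A * B + B * A)
      ≤ 2 * Real.sqrt 2 * ‖B‖
        * Real.sqrt ((nrad A) ^ 2 - (1/4) * |‖reP A + imP A‖ ^ 2 - ‖reP A - imP A‖ ^ 2|)
    ∧ nrad (A * B - B * A)
      ≤ 2 * Real.sqrt 2 * ‖B‖
        * Real.sqrt ((nrad A) ^ 2 - (1/4) * |‖reP A + imP A‖ ^ 2 - ‖reP A - imP A‖ ^ 2|) := by
  set bound := 2 * Real.sqrt 2 * ‖B‖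
    * Real.sqrt ((nrad A) ^ 2 - (1/4) * |‖reP A + imP A‖ ^ 2 - ‖reP A - imP A‖ ^ 2|)
  have key : ∀ x : H, ‖x‖ = 1 →
      ‖inner ℂ ((A * B) x) x‖ + ‖inner ℂ ((B * A) x) x‖ ≤ bound := by
    intro x hx
    have hsq : ‖A x‖ ^ 2 + ‖adjoint A x‖ ^ 2 ≤ ‖reP A + imP A‖ ^ 2 + ‖reP A - imP A‖ ^ 2 := by
      rw [norm_sq_apply_add_norm_sq_adjoint_apply]
      gcongr <;> exact unit_le_opNorm _ x hx.le
    have hsum := add_le_two_mul_sqrt_two_mul_sqrt hsq (norm_reP_add_imP_sq_le A)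
      (norm_reP_sub_imP_sq_le A)
    calc _ ≤ ‖B‖ * (‖A x‖ + ‖adjoint A x‖) := norm_inner_mul_apply_self_add_le A B hx
      _ ≤ bound := by nlinarith [norm_nonneg B]
  constructor
  · refine nrad_le _ (by positivity) fun x hx => ?_
    rw [add_apply, inner_add_left]
    exact (norm_add_le _ _).trans (key x hx)
  · refine nrad_le _ (by positivity) fun x hx => ?_
    rw [sub_apply, inner_sub_left]
    exact (norm_sub_le _ _).trans (key x hx)
end
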